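/- arXiv:math/0612477 — 4 statements merged into one kernel-verified Lean document; each statement's English description precedes it below -/
import Mathlib

section
/- Let λ : C → D be a morphism of coalgebras over a field K with C finite-dimensional. Then the map α ↦ α* = (c* ↦ c*∘α) is a bijection from the set of D-bicomodule morphisms D → C onto the set of D*-bimodule morphisms C* → D*, where C* is a D*-bimodule via λ* and D* is a bimodule over itself via convolution. -/
open TensorProduct LinearMap

/-- Convolution product on the dual of a "coalgebra" `(C, Δ)`. -/
noncomputable def conv {K C : Type*} [Field K] [AddCommGroup C] [Module K C]
    (Δ : C →ₗ[K] C ⊗[K] C) (f g : C →ₗ[K] K) : C →ₗ[K] K :=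
  (TensorProduct.lid K K).toLinearMap ∘ₗ TensorProduct.map f g ∘ₗ Δ

section Aux

variable {K M N P : Type*} [Field K] [AddCommGroup M] [Module K M]
  [AddCommGroup N] [Module K N] [AddCommGroup P] [Module K P]

/-- Pure-tensor functionals separate points of a tensor product over a field. -/
theorem tensor_sep (t : M ⊗[K] N)
    (h : ∀ (f : M →ₗ[K] K) (g : N →ₗ[K] K),
      TensorProduct.lid K K (TensorProduct.map f g t) = 0) : t = 0 := by
  classical
  set bM := Module.Basis.ofVectorSpace K M
  set bN := Module.Basis.ofVectorSpace K N
  set b := bM.tensorProduct bN with hb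
  have hrepr : b.repr t = 0 := by
    ext ij
    obtain ⟨i, j⟩ := ij
    have key : ((Finsupp.lapply (i, j) : _ →ₗ[K] K) ∘ₗ (b.repr : M ⊗[K] N →ₗ[K] _))
        = (TensorProduct.lid K K).toLinearMap ∘ₗ
            TensorProduct.map (bM.coord i) (bN.coord j) := by
      apply TensorProduct.ext'
      intro x y
      simp [hb, Module.Basis.tensorProduct_repr_tmul_apply, Module.Basis.coord_apply, mul_comm]
    have h2 := LinearMap.congr_fun key t
    simp only [LinearMap.comp_apply, Finsupp.lapply_apply, LinearEquiv.coe_coe,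
      LinearEquiv.coe_toLinearMap, Finsupp.coe_zero, Pi.zero_apply] at h2 ⊢
    rw [h2]
    exact h _ _
  have := congrArg b.repr.symm hrepr
  simpa using this

theorem tensor_eq_of_sep {t s : M ⊗[K] N}
    (h : ∀ (f : M →ₗ[K] K) (g : N →ₗ[K] K),
      TensorProduct.lid K K (TensorProduct.map f g t)
        = TensorProduct.lid K K (TensorProduct.map f g s)) : t = s := by
  have h0 := tensor_sep (t - s) (fun f g => by
    simp only [map_sub, h f g, sub_self])
  exact sub_eq_zero.mp h0

end Aux

/-- for a coalgebra morphism `λ : C → D` with `C` finite-dimensional,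
`α ↦ α* = (c* ↦ c*∘α)` is a bijection from the `D`-bicomodule morphisms `D → C`
onto the `D*`-bimodule morphisms `C* → D*` (where `C*` is a `D*`-bimodule via `λ*`
and `D*` is the convolution algebra). -/
theorem stmt9 {K C D : Type*} [Field K]
    [AddCommGroup C] [Module K C] [AddCommGroup D] [Module K D]
    [FiniteDimensional K C]
    (ΔC : C →ₗ[K] C ⊗[K] C) (εC : C →ₗ[K] K)
    (ΔD : D →ₗ[K] D ⊗[K] D) (εD : D →ₗ[K] K)
    (hcoC : (TensorProduct.assoc K C C C).toLinearMap ∘ₗ rTensor C ΔC ∘ₗ ΔC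
      = lTensor C ΔC ∘ₗ ΔC)
    (hclC : (TensorProduct.lid K C).toLinearMap ∘ₗ rTensor C εC ∘ₗ ΔC = LinearMap.id)
    (hcrC : (TensorProduct.rid K C).toLinearMap ∘ₗ lTensor C εC ∘ₗ ΔC = LinearMap.id)
    (hcoD : (TensorProduct.assoc K D D D).toLinearMap ∘ₗ rTensor D ΔD ∘ₗ ΔD
      = lTensor D ΔD ∘ₗ ΔD)
    (hclD : (TensorProduct.lid K D).toLinearMap ∘ₗ rTensor D εD ∘ₗ ΔD = LinearMap.id)
    (hcrD : (TensorProduct.rid K D).toLinearMap ∘ₗ lTensor D εD ∘ₗ ΔD = LinearMap.id)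
    (lam : C →ₗ[K] D)
    (hlamΔ : TensorProduct.map lam lam ∘ₗ ΔC = ΔD ∘ₗ lam)
    (hlamε : εD ∘ₗ lam = εC) :
    ∃ Φ : {α : D →ₗ[K] C //
        (lTensor C lam ∘ₗ ΔC) ∘ₗ α = rTensor D α ∘ₗ ΔD ∧
        (rTensor C lam ∘ₗ ΔC) ∘ₗ α = lTensor D α ∘ₗ ΔD} ≃
      {u : (C →ₗ[K] K) →ₗ[K] (D →ₗ[K] K) //
        ∀ (c : C →ₗ[K] K) (d : D →ₗ[K] K),
          u (conv ΔC c (d ∘ₗ lam)) = conv ΔD (u c) d ∧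
          u (conv ΔC (d ∘ₗ lam) c) = conv ΔD d (u c)},
      ∀ α, (Φ α : (C →ₗ[K] K) →ₗ[K] (D →ₗ[K] K)) = (α : D →ₗ[K] C).dualMap := by
  classical
  -- the inverse at the level of plain linear maps
  let S : ((C →ₗ[K] K) →ₗ[K] (D →ₗ[K] K)) → (D →ₗ[K] C) := fun u =>
    (Module.evalEquiv K C).symm.toLinearMap ∘ₗ u.dualMap ∘ₗ Module.Dual.eval K D
  have hS : ∀ (u : (C →ₗ[K] K) →ₗ[K] (D →ₗ[K] K)) (f : C →ₗ[K] K) (d : D),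
      f (S u d) = u f d := by
    intro u f d
    have h1 : Module.evalEquiv K C (S u d) = u.dualMap (Module.Dual.eval K D d) :=
      (Module.evalEquiv K C).apply_symm_apply _
    have h2 := DFunLike.congr_fun h1 f
    simpa [Module.evalEquiv_apply, Module.Dual.eval_apply] using h2
  have hST : ∀ α : D →ₗ[K] C, S α.dualMap = α := by
    intro α
    ext d
    rw [← sub_eq_zero, ← Module.forall_dual_apply_eq_zero_iff K]
    intro f
    have := hS α.dualMap f d
    simp only [dualMap_apply] at this
    simp [this]
  have hTS : ∀ u : ((C →ₗ[K] K) →ₗ[K] (D →ₗ[K] K)), (S u).dualMap = u := by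
    intro u
    refine LinearMap.ext fun f => LinearMap.ext fun d => ?_
    simpa using hS u f d
  -- key computational identities
  have key1 : ∀ (α : D →ₗ[K] C) (c : C →ₗ[K] K) (d : D →ₗ[K] K) (x : D),
      α.dualMap (conv ΔC c (d ∘ₗ lam)) x
        = TensorProduct.lid K K (TensorProduct.map c d
            (((lTensor C lam ∘ₗ ΔC) ∘ₗ α) x)) := by
    intro α c d x
    have hmap : TensorProduct.map c (d ∘ₗ lam)
        = TensorProduct.map c d ∘ₗ lTensor C lam := by
      apply TensorProduct.ext'; intro x y; simp
    simp only [conv, dualMap_apply, coe_comp, Function.comp_apply,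
      LinearEquiv.coe_coe, hmap]
  have key1' : ∀ (α : D →ₗ[K] C) (c : C →ₗ[K] K) (d : D →ₗ[K] K) (x : D),
      conv ΔD (α.dualMap c) d x
        = TensorProduct.lid K K (TensorProduct.map c d
            ((rTensor D α ∘ₗ ΔD) x)) := by
    intro α c d x
    have hmap : TensorProduct.map (c ∘ₗ α) d
        = TensorProduct.map c d ∘ₗ rTensor D α := by
      apply TensorProduct.ext'; intro x y; simp
    simp only [conv, dualMap_apply', coe_comp, Function.comp_apply,
      LinearEquiv.coe_coe, hmap]
  have key2 : ∀ (α : D →ₗ[K] C) (c : C →ₗ[K] K) (d : D →ₗ[K] K) (x : D),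
      α.dualMap (conv ΔC (d ∘ₗ lam) c) x
        = TensorProduct.lid K K (TensorProduct.map d c
            (((rTensor C lam ∘ₗ ΔC) ∘ₗ α) x)) := by
    intro α c d x
    have hmap : TensorProduct.map (d ∘ₗ lam) c
        = TensorProduct.map d c ∘ₗ rTensor C lam := by
      apply TensorProduct.ext'; intro x y; simp
    simp only [conv, dualMap_apply, coe_comp, Function.comp_apply,
      LinearEquiv.coe_coe, hmap]
  have key2' : ∀ (α : D →ₗ[K] C) (c : C →ₗ[K] K) (d : D →ₗ[K] K) (x : D),
      conv ΔD d (α.dualMap c) x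
        = TensorProduct.lid K K (TensorProduct.map d c
            ((lTensor D α ∘ₗ ΔD) x)) := by
    intro α c d x
    have hmap : TensorProduct.map d (c ∘ₗ α)
        = TensorProduct.map d c ∘ₗ lTensor D α := by
      apply TensorProduct.ext'; intro x y; simp
    simp only [conv, dualMap_apply', coe_comp, Function.comp_apply,
      LinearEquiv.coe_coe, hmap]
  -- the condition equivalence
  have hiff : ∀ α : D →ₗ[K] C,
      ((lTensor C lam ∘ₗ ΔC) ∘ₗ α = rTensor D α ∘ₗ ΔD ∧
        (rTensor C lam ∘ₗ ΔC) ∘ₗ α = lTensor D α ∘ₗ ΔD) ↔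
      (∀ (c : C →ₗ[K] K) (d : D →ₗ[K] K),
          α.dualMap (conv ΔC c (d ∘ₗ lam)) = conv ΔD (α.dualMap c) d ∧
          α.dualMap (conv ΔC (d ∘ₗ lam) c) = conv ΔD d (α.dualMap c)) := by
    intro α
    constructor
    · rintro ⟨h1, h2⟩ c d
      constructor
      · ext x
        rw [key1, key1', h1]
      · ext x
        rw [key2, key2', h2]
    · intro h
      constructor
      · ext x
        apply tensor_eq_of_sep
        intro c d
        rw [← key1, ← key1', (h c d).1]
      · ext x
        apply tensor_eq_of_sep
        intro d c
        rw [← key2, ← key2', (h c d).2]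
  -- assemble
  let e : (D →ₗ[K] C) ≃ ((C →ₗ[K] K) →ₗ[K] (D →ₗ[K] K)) :=
    ⟨fun α => α.dualMap, S, hST, hTS⟩
  refine ⟨Equiv.subtypeEquiv e (fun α => ?_), fun α => rfl⟩
  exact hiff α
end

section
/- Let λ : C → D be a morphism of coalgebras over a field K, and suppose there exist a D-bicomodule morphism α : D → C and a C-bicomodule morphism β : C □_D C → C such that β(Σ α(λ(c₁))⊗c₂) = c for all c ∈ C. Let (d_k) be a K-basis of D. Then C is spanned by the set of 'left tensor legs' of the elements Δ_C(α(d_k)); in particular, if D is finite-dimensional then C is finite-dimensional. -/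
open TensorProduct LinearMap

/-- suppose `λ : C → D` is a coalgebra morphism and there are a
`D`-bicomodule morphism `α : D → C` and a `C`-bicomodule morphism
`β : C □_D C → C` (given as a linear map on `C⊗C` with the bicomodule-morphism
conditions on the cotensor product) with `β(Σ αλ(c₁)⊗c₂) = c` for all `c`.
If `(d_k)` is a basis of `D`, then `C` is spanned by the left tensor legs of the
elements `Δ_C(α(d_k))` (expressed canonically via contractions of the right leg
against arbitrary functionals); in particular if `D` is finite-dimensional then so
is `C`. -/
theorem stmt11 {K C D ι : Type*} [Field K]
    [AddCommGroup C] [Module K C] [AddCommGroup D] [Module K D]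
    (ΔC : C →ₗ[K] C ⊗[K] C) (εC : C →ₗ[K] K)
    (ΔD : D →ₗ[K] D ⊗[K] D) (εD : D →ₗ[K] K)
    (hcoC : (TensorProduct.assoc K C C C).toLinearMap ∘ₗ rTensor C ΔC ∘ₗ ΔC
      = lTensor C ΔC ∘ₗ ΔC)
    (hclC : (TensorProduct.lid K C).toLinearMap ∘ₗ rTensor C εC ∘ₗ ΔC = LinearMap.id)
    (hcrC : (TensorProduct.rid K C).toLinearMap ∘ₗ lTensor C εC ∘ₗ ΔC = LinearMap.id)
    (hcoD : (TensorProduct.assoc K D D D).toLinearMap ∘ₗ rTensor D ΔD ∘ₗ ΔD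
      = lTensor D ΔD ∘ₗ ΔD)
    (hclD : (TensorProduct.lid K D).toLinearMap ∘ₗ rTensor D εD ∘ₗ ΔD = LinearMap.id)
    (hcrD : (TensorProduct.rid K D).toLinearMap ∘ₗ lTensor D εD ∘ₗ ΔD = LinearMap.id)
    (lam : C →ₗ[K] D)
    (hlamΔ : TensorProduct.map lam lam ∘ₗ ΔC = ΔD ∘ₗ lam)
    (hlamε : εD ∘ₗ lam = εC)
    -- `α : D → C` is a morphism of `D`-bicomodules:
    (α : D →ₗ[K] C)
    (hαr : (lTensor C lam ∘ₗ ΔC) ∘ₗ α = rTensor D α ∘ₗ ΔD)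
    (hαl : (rTensor C lam ∘ₗ ΔC) ∘ₗ α = lTensor D α ∘ₗ ΔD)
    -- `β : C □_D C → C` is a morphism of `C`-bicomodules:
    (β : C ⊗[K] C →ₗ[K] C)
    (hβl : ∀ x ∈ LinearMap.ker ((TensorProduct.assoc K C D C).toLinearMap
        ∘ₗ rTensor C (lTensor C lam ∘ₗ ΔC) - lTensor C (rTensor C lam ∘ₗ ΔC)),
      ΔC (β x) = (lTensor C β) ((TensorProduct.assoc K C C C) ((rTensor C ΔC) x)))
    (hβr : ∀ x ∈ LinearMap.ker ((TensorProduct.assoc K C D C).toLinearMap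
        ∘ₗ rTensor C (lTensor C lam ∘ₗ ΔC) - lTensor C (rTensor C lam ∘ₗ ΔC)),
      ΔC (β x) = (rTensor C β) ((TensorProduct.assoc K C C C).symm ((lTensor C ΔC) x)))
    -- `β(Σ αλ(c₁) ⊗ c₂) = c`:
    (hβα : ∀ c : C, β ((rTensor C (α ∘ₗ lam)) (ΔC c)) = c)
    -- a basis of `D`:
    (b : Module.Basis ι K D) :
    Submodule.span K {c : C | ∃ (k : ι) (f : C →ₗ[K] K),
        c = (TensorProduct.rid K C) ((lTensor C f) (ΔC (α (b k))))} = ⊤ ∧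
      (FiniteDimensional K D → FiniteDimensional K C) := by
  classical
  set genSet : Set C := {c : C | ∃ (k : ι) (f : C →ₗ[K] K),
      c = (TensorProduct.rid K C) ((lTensor C f) (ΔC (α (b k))))} with hgenSet
  set S : Submodule K C := Submodule.span K genSet with hS
  -- Step 0: auxiliary map identities (pointwise true, no hypotheses needed)
  have h0 : rTensor D α ∘ₗ TensorProduct.map lam lam = TensorProduct.map (α ∘ₗ lam) lam := by
    apply TensorProduct.ext'
    intro x y
    simp
  -- `(lTensor lam ∘ ΔC) ∘ (α ∘ lam) = map (α∘lam) lam ∘ ΔC`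
  have h1 : (lTensor C lam ∘ₗ ΔC) ∘ₗ (α ∘ₗ lam)
      = TensorProduct.map (α ∘ₗ lam) lam ∘ₗ ΔC := by
    calc (lTensor C lam ∘ₗ ΔC) ∘ₗ (α ∘ₗ lam)
        = ((lTensor C lam ∘ₗ ΔC) ∘ₗ α) ∘ₗ lam := rfl
      _ = (rTensor D α ∘ₗ ΔD) ∘ₗ lam := by rw [hαr]
      _ = rTensor D α ∘ₗ (ΔD ∘ₗ lam) := rfl
      _ = rTensor D α ∘ₗ (TensorProduct.map lam lam ∘ₗ ΔC) := by rw [hlamΔ]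
      _ = (rTensor D α ∘ₗ TensorProduct.map lam lam) ∘ₗ ΔC := rfl
      _ = TensorProduct.map (α ∘ₗ lam) lam ∘ₗ ΔC := by rw [h0]
  -- naturality of assoc
  have h3 : ∀ y : (C ⊗[K] C) ⊗[K] C,
      (TensorProduct.assoc K C D C) (rTensor C (TensorProduct.map (α ∘ₗ lam) lam) y)
        = TensorProduct.map (α ∘ₗ lam) (rTensor C lam) ((TensorProduct.assoc K C C C) y) := by
    intro y
    have : TensorProduct.map (α ∘ₗ lam) (rTensor C lam)
          ∘ₗ (TensorProduct.assoc K C C C).toLinearMap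
        = (TensorProduct.assoc K C D C).toLinearMap
          ∘ₗ rTensor C (TensorProduct.map (α ∘ₗ lam) lam) := by
      apply TensorProduct.ext_threefold
      intro x y z
      rfl
    exact (LinearMap.congr_fun this y).symm
  have h4 : TensorProduct.map (α ∘ₗ lam) (rTensor C lam ∘ₗ ΔC)
      = TensorProduct.map (α ∘ₗ lam) (rTensor C lam) ∘ₗ lTensor C ΔC := by
    apply TensorProduct.ext'
    intro x y
    rfl
  -- Step 1: `Σ αλ(c₁) ⊗ c₂` lies in the cotensor product
  have hker : ∀ c : C, rTensor C (α ∘ₗ lam) (ΔC c) ∈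
      LinearMap.ker ((TensorProduct.assoc K C D C).toLinearMap
        ∘ₗ rTensor C (lTensor C lam ∘ₗ ΔC) - lTensor C (rTensor C lam ∘ₗ ΔC)) := by
    intro c
    rw [LinearMap.mem_ker, LinearMap.sub_apply, sub_eq_zero, LinearMap.comp_apply]
    have hco := LinearMap.congr_fun hcoC c
    simp only [LinearMap.comp_apply, LinearEquiv.coe_coe] at hco
    have rhs_eq := LinearMap.congr_fun
      (lTensor_comp_rTensor (f := α ∘ₗ lam) (g := rTensor C lam ∘ₗ ΔC)) (ΔC c)
    simp only [LinearMap.comp_apply] at rhs_eq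
    calc (TensorProduct.assoc K C D C).toLinearMap
          (rTensor C (lTensor C lam ∘ₗ ΔC) (rTensor C (α ∘ₗ lam) (ΔC c)))
        = (TensorProduct.assoc K C D C).toLinearMap
            (rTensor C ((lTensor C lam ∘ₗ ΔC) ∘ₗ (α ∘ₗ lam)) (ΔC c)) := by
          rw [← rTensor_comp_apply]
      _ = (TensorProduct.assoc K C D C).toLinearMap
            (rTensor C (TensorProduct.map (α ∘ₗ lam) lam ∘ₗ ΔC) (ΔC c)) := by rw [h1]
      _ = (TensorProduct.assoc K C D C).toLinearMap
            (rTensor C (TensorProduct.map (α ∘ₗ lam) lam) (rTensor C ΔC (ΔC c))) := by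
          rw [rTensor_comp_apply]
      _ = TensorProduct.map (α ∘ₗ lam) (rTensor C lam)
            ((TensorProduct.assoc K C C C) (rTensor C ΔC (ΔC c))) := h3 _
      _ = TensorProduct.map (α ∘ₗ lam) (rTensor C lam) ((lTensor C ΔC) (ΔC c)) := by
          rw [hco]
      _ = TensorProduct.map (α ∘ₗ lam) (rTensor C lam ∘ₗ ΔC) (ΔC c) :=
          (LinearMap.congr_fun h4 (ΔC c)).symm
      _ = lTensor C (rTensor C lam ∘ₗ ΔC) (rTensor C (α ∘ₗ lam) (ΔC c)) := rhs_eq.symm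
  -- Step 2: the key identity `ΔC c = Σ (αλ(c₁))₁ ⊗ β((αλ(c₁))₂ ⊗ c₂)`
  have key : ∀ c : C, ΔC c = lTensor C β ((TensorProduct.assoc K C C C)
      ((rTensor C ΔC) (rTensor C (α ∘ₗ lam) (ΔC c)))) := by
    intro c
    have := hβl _ (hker c)
    rwa [hβα c] at this
  -- Step 3: generators for any `d : D`, not just basis vectors
  have hgen : ∀ (d : D) (f : C →ₗ[K] K),
      (TensorProduct.rid K C) ((lTensor C f) (ΔC (α d))) ∈ S := by
    intro d f
    set T : D →ₗ[K] C :=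
      (TensorProduct.rid K C).toLinearMap ∘ₗ lTensor C f ∘ₗ ΔC ∘ₗ α with hT
    have hd : d ∈ Submodule.span K (Set.range b) := by
      rw [b.span_eq]; trivial
    have : Submodule.span K (Set.range b) ≤ S.comap T := by
      rw [Submodule.span_le]
      rintro _ ⟨k, rfl⟩
      simp only [Submodule.mem_comap, hT, LinearMap.comp_apply]
      exact Submodule.subset_span ⟨k, f, rfl⟩
    exact this hd
  -- Step 4: spanning
  have hspan : S = ⊤ := by
    rw [eq_top_iff]
    intro c _
    have hc : c = (TensorProduct.rid K C) ((lTensor C εC) (ΔC c)) :=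
      (LinearMap.congr_fun hcrC c).symm
    rw [hc, key c]
    -- the linear map `G : C ⊗ C → C` applied to `ΔC c`
    set G : C ⊗[K] C →ₗ[K] C :=
      (TensorProduct.rid K C).toLinearMap ∘ₗ lTensor C εC ∘ₗ lTensor C β
        ∘ₗ (TensorProduct.assoc K C C C).toLinearMap ∘ₗ rTensor C ΔC
        ∘ₗ rTensor C (α ∘ₗ lam) with hG
    have : ∀ t : C ⊗[K] C, G t ∈ S := by
      intro t
      induction t using TensorProduct.induction_on with
      | zero => simp
      | tmul a c₂ =>
        have ht : G (a ⊗ₜ[K] c₂)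
            = (TensorProduct.rid K C) ((lTensor C εC) ((lTensor C β)
              ((TensorProduct.assoc K C C C) ((ΔC (α (lam a))) ⊗ₜ[K] c₂)))) := rfl
        set g : C →ₗ[K] K := εC ∘ₗ β ∘ₗ (TensorProduct.mk K C C).flip c₂ with hg
        have hpoint : ∀ u : C ⊗[K] C,
            (TensorProduct.rid K C) ((lTensor C εC) ((lTensor C β)
              ((TensorProduct.assoc K C C C) (u ⊗ₜ[K] c₂))))
            = (TensorProduct.rid K C) ((lTensor C g) u) := by
          intro u
          induction u using TensorProduct.induction_on with
          | zero => simp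
          | tmul p q => simp [hg]
          | add u v hu hv =>
            rw [add_tmul]
            simp only [map_add, hu, hv]
        rw [ht, hpoint]
        exact hgen (lam a) g
      | add u v hu hv => rw [map_add]; exact S.add_mem hu hv
    exact this (ΔC c)
  refine ⟨hspan, ?_⟩
  -- Step 5: finite-dimensionality
  intro hD
  haveI : Fintype ι := FiniteDimensional.fintypeBasisIndex b
  choose s hs using fun k : ι => TensorProduct.exists_finset (ΔC (α (b k)))
  set Sfin : Finset C := Finset.univ.biUnion (fun k : ι => (s k).image Prod.fst)
    with hSfin
  have hsub : genSet ⊆ (Submodule.span K (Sfin : Set C) : Set C) := by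
    rintro _ ⟨k, f, rfl⟩
    rw [hs k]
    rw [map_sum, map_sum]
    refine Submodule.sum_mem _ ?_
    intro i hi
    have : (TensorProduct.rid K C) ((lTensor C f) (i.1 ⊗ₜ[K] i.2)) = f i.2 • i.1 := by
      simp [TensorProduct.smul_tmul']
    rw [this]
    refine Submodule.smul_mem _ _ (Submodule.subset_span ?_)
    simp only [hSfin, Finset.coe_biUnion, Finset.coe_image, Set.mem_iUnion]
    exact ⟨k, Finset.mem_univ k, Set.mem_image_of_mem _ hi⟩
  have htop : Submodule.span K (Sfin : Set C) = ⊤ := by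
    rw [eq_top_iff, ← hspan, hS, Submodule.span_le]
    exact hsub
  exact ⟨⟨Sfin, htop⟩⟩
end

section
/- Let λ : C → D be a morphism of coalgebras over a field K, and β : C □_D C → C a K-linear map that is simultaneously a morphism of left and of right C-comodules. Then for every right C-comodule M, the map ε_M : M □_D C → M defined by ε_M(Σ m⊗c) = Σ m₀ ε_C(β(m₁⊗c)) is a morphism of right C-comodules (here Σ m₀⊗(m₁⊗c) is viewed in M⊗(C □_D C) via the canonical identification). -/
open TensorProduct LinearMap

section Aux

variable {R : Type*} [CommSemiring R]
variable {A A' B B' P P' : Type*}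
  [AddCommMonoid A] [AddCommMonoid A'] [AddCommMonoid B] [AddCommMonoid B']
  [AddCommMonoid P] [AddCommMonoid P']
  [Module R A] [Module R A'] [Module R B] [Module R B'] [Module R P] [Module R P']

lemma stmt17natFst (f : A →ₗ[R] A') :
    rTensor (B ⊗[R] P) f ∘ₗ (TensorProduct.assoc R A B P).toLinearMap
      = (TensorProduct.assoc R A' B P).toLinearMap ∘ₗ rTensor P (rTensor B f) := by
  apply TensorProduct.ext_threefold; intro a b c; simp

lemma stmt17natFst' (f : A →ₗ[R] A') :
    rTensor P (rTensor B f) ∘ₗ (TensorProduct.assoc R A B P).symm.toLinearMap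
      = (TensorProduct.assoc R A' B P).symm.toLinearMap ∘ₗ rTensor (B ⊗[R] P) f := by
  apply TensorProduct.ext'; intro a w
  induction w using TensorProduct.induction_on with
  | zero => simp
  | tmul b c => simp
  | add u v hu hv => simp only [tmul_add, map_add, hu, hv]

lemma stmt17natMid (g : B →ₗ[R] B') :
    lTensor A (rTensor P g) ∘ₗ (TensorProduct.assoc R A B P).toLinearMap
      = (TensorProduct.assoc R A B' P).toLinearMap ∘ₗ rTensor P (lTensor A g) := by
  apply TensorProduct.ext_threefold; intro a b c; simp

lemma stmt17natLst (h : P →ₗ[R] P') :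
    lTensor A (lTensor B h) ∘ₗ (TensorProduct.assoc R A B P).toLinearMap
      = (TensorProduct.assoc R A B P').toLinearMap ∘ₗ lTensor (A ⊗[R] B) h := by
  apply TensorProduct.ext_threefold; intro a b c; simp

lemma stmt17natRid (f : A →ₗ[R] A') :
    f ∘ₗ (TensorProduct.rid R A).toLinearMap
      = (TensorProduct.rid R A').toLinearMap ∘ₗ rTensor R f := by
  apply TensorProduct.ext'; intro a r; simp

end Aux

set_option maxHeartbeats 1000000 in
/-- for a coalgebra morphism `λ : C → D` and a map
`β : C □_D C → C` which is a morphism of left and of right `C`-comodules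
(here given by a linear map `β` on `C ⊗ C` whose comodule-morphism conditions are
required on the cotensor product `C □_D C = ker ω^D_{C,C}`), the map
`ε_M : M □_D C → M`, `Σ m⊗c ↦ Σ m₀ ε_C(β(m₁⊗c))` is a morphism of right
`C`-comodules, for every right `C`-comodule `M`. -/
theorem stmt17 {K C D M : Type*} [Field K]
    [AddCommGroup C] [Module K C] [AddCommGroup D] [Module K D]
    [AddCommGroup M] [Module K M]
    (ΔC : C →ₗ[K] C ⊗[K] C) (εC : C →ₗ[K] K)
    (ΔD : D →ₗ[K] D ⊗[K] D) (εD : D →ₗ[K] K)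
    (hcoC : (TensorProduct.assoc K C C C).toLinearMap ∘ₗ rTensor C ΔC ∘ₗ ΔC
      = lTensor C ΔC ∘ₗ ΔC)
    (hclC : (TensorProduct.lid K C).toLinearMap ∘ₗ rTensor C εC ∘ₗ ΔC = LinearMap.id)
    (hcrC : (TensorProduct.rid K C).toLinearMap ∘ₗ lTensor C εC ∘ₗ ΔC = LinearMap.id)
    (hcoD : (TensorProduct.assoc K D D D).toLinearMap ∘ₗ rTensor D ΔD ∘ₗ ΔD
      = lTensor D ΔD ∘ₗ ΔD)
    (hclD : (TensorProduct.lid K D).toLinearMap ∘ₗ rTensor D εD ∘ₗ ΔD = LinearMap.id)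
    (hcrD : (TensorProduct.rid K D).toLinearMap ∘ₗ lTensor D εD ∘ₗ ΔD = LinearMap.id)
    (lam : C →ₗ[K] D)
    (hlamΔ : TensorProduct.map lam lam ∘ₗ ΔC = ΔD ∘ₗ lam)
    (hlamε : εD ∘ₗ lam = εC)
    -- the right `C`-comodule `M`:
    (ρM : M →ₗ[K] M ⊗[K] C)
    (hρMco : (TensorProduct.assoc K M C C).toLinearMap ∘ₗ rTensor C ρM ∘ₗ ρM
      = lTensor M ΔC ∘ₗ ρM)
    (hρMcu : (TensorProduct.rid K M).toLinearMap ∘ₗ lTensor M εC ∘ₗ ρM = LinearMap.id)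
    -- `β` is a morphism of left and of right `C`-comodules on `C □_D C`:
    (β : C ⊗[K] C →ₗ[K] C)
    (hβl : ∀ x ∈ LinearMap.ker ((TensorProduct.assoc K C D C).toLinearMap
        ∘ₗ rTensor C (lTensor C lam ∘ₗ ΔC) - lTensor C (rTensor C lam ∘ₗ ΔC)),
      ΔC (β x) = (lTensor C β) ((TensorProduct.assoc K C C C) ((rTensor C ΔC) x)))
    (hβr : ∀ x ∈ LinearMap.ker ((TensorProduct.assoc K C D C).toLinearMap
        ∘ₗ rTensor C (lTensor C lam ∘ₗ ΔC) - lTensor C (rTensor C lam ∘ₗ ΔC)),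
      ΔC (β x) = (rTensor C β) ((TensorProduct.assoc K C C C).symm ((lTensor C ΔC) x))) :
    -- conclusion: `ε_M` is a morphism of right `C`-comodules on `M □_D C`
    ∀ x ∈ LinearMap.ker ((TensorProduct.assoc K M D C).toLinearMap
        ∘ₗ rTensor C ((lTensor M lam ∘ₗ ρM)) - lTensor M (rTensor C lam ∘ₗ ΔC)),
      ρM (((TensorProduct.rid K M).toLinearMap ∘ₗ lTensor M εC ∘ₗ lTensor M β
          ∘ₗ (TensorProduct.assoc K M C C).toLinearMap ∘ₗ rTensor C ρM) x)
        = (rTensor C ((TensorProduct.rid K M).toLinearMap ∘ₗ lTensor M εC ∘ₗ lTensor M β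
            ∘ₗ (TensorProduct.assoc K M C C).toLinearMap ∘ₗ rTensor C ρM))
          ((TensorProduct.assoc K M C C).symm ((lTensor M ΔC) x)) := by
  intro x hx
  set E : M ⊗[K] C →ₗ[K] M :=
    (TensorProduct.rid K M).toLinearMap ∘ₗ lTensor M εC ∘ₗ lTensor M β
      ∘ₗ (TensorProduct.assoc K M C C).toLinearMap ∘ₗ rTensor C ρM with hE
  set f : C ⊗[K] C →ₗ[K] K := εC ∘ₗ β with hf
  set ω' : C ⊗[K] C →ₗ[K] C ⊗[K] (D ⊗[K] C) :=
    (TensorProduct.assoc K C D C).toLinearMap ∘ₗ rTensor C (lTensor C lam ∘ₗ ΔC)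
      - lTensor C (rTensor C lam ∘ₗ ΔC) with hω'
  set h₁ : C ⊗[K] C →ₗ[K] C :=
    (TensorProduct.rid K C).toLinearMap ∘ₗ lTensor C f
      ∘ₗ (TensorProduct.assoc K C C C).toLinearMap ∘ₗ rTensor C ΔC with hh₁
  set h₂ : C ⊗[K] C →ₗ[K] C :=
    (TensorProduct.lid K C).toLinearMap ∘ₗ rTensor C f
      ∘ₗ (TensorProduct.assoc K C C C).symm.toLinearMap ∘ₗ lTensor C ΔC with hh₂
  set u : (M ⊗[K] C) ⊗[K] C := rTensor C ρM x with hu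
  set y : M ⊗[K] (C ⊗[K] C) := (TensorProduct.assoc K M C C).toLinearMap u with hy
  have hE' : E = (TensorProduct.rid K M).toLinearMap ∘ₗ lTensor M f
      ∘ₗ (TensorProduct.assoc K M C C).toLinearMap ∘ₗ rTensor C ρM := by
    rw [hE, hf, lTensor_comp]
    simp only [LinearMap.comp_assoc]
  have h5 : rTensor C ρM ∘ₗ ρM
      = (TensorProduct.assoc K M C C).symm.toLinearMap ∘ₗ (lTensor M ΔC ∘ₗ ρM) := by
    rw [← hρMco]; ext m
    simp only [LinearMap.coe_comp, Function.comp_apply, LinearEquiv.coe_coe,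
      LinearEquiv.coe_toLinearMap, LinearEquiv.symm_apply_apply]
  -- pure coherence identity 1
  have P1 : (TensorProduct.rid K (M ⊗[K] C)).toLinearMap ∘ₗ lTensor (M ⊗[K] C) f
        ∘ₗ (TensorProduct.assoc K (M ⊗[K] C) C C).toLinearMap
        ∘ₗ rTensor C (TensorProduct.assoc K M C C).symm.toLinearMap
      = lTensor M (TensorProduct.rid K C).toLinearMap ∘ₗ lTensor M (lTensor C f)
        ∘ₗ lTensor M (TensorProduct.assoc K C C C).toLinearMap
        ∘ₗ (TensorProduct.assoc K M (C ⊗[K] C) C).toLinearMap := by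
    apply TensorProduct.ext_threefold; intro m w c
    induction w using TensorProduct.induction_on with
    | zero => simp only [zero_tmul, tmul_zero, map_zero]
    | tmul a b =>
      simp only [LinearMap.coe_comp, Function.comp_apply, LinearEquiv.coe_coe,
        LinearEquiv.coe_toLinearMap, rTensor_tmul, lTensor_tmul, assoc_tmul,
        assoc_symm_tmul, rid_tmul, lid_tmul, tmul_smul, smul_tmul]
    | add w₁ w₂ hw₁ hw₂ => simp only [tmul_add, add_tmul, map_add, hw₁, hw₂]
  -- pure coherence identity 2
  have P2 : rTensor C (TensorProduct.rid K M).toLinearMap ∘ₗ rTensor C (lTensor M f)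
        ∘ₗ rTensor C (TensorProduct.assoc K M C C).toLinearMap
        ∘ₗ (TensorProduct.assoc K (M ⊗[K] C) C C).symm.toLinearMap
      = lTensor M (TensorProduct.lid K C).toLinearMap ∘ₗ lTensor M (rTensor C f)
        ∘ₗ lTensor M (TensorProduct.assoc K C C C).symm.toLinearMap
        ∘ₗ (TensorProduct.assoc K M C (C ⊗[K] C)).toLinearMap := by
    apply TensorProduct.ext'; intro w v
    induction w using TensorProduct.induction_on with
    | zero => simp only [zero_tmul, map_zero]
    | tmul m a =>
      induction v using TensorProduct.induction_on with
      | zero => simp only [tmul_zero, map_zero]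
      | tmul b c =>
        simp only [LinearMap.coe_comp, Function.comp_apply, LinearEquiv.coe_coe,
          LinearEquiv.coe_toLinearMap, rTensor_tmul, lTensor_tmul, assoc_tmul,
          assoc_symm_tmul, rid_tmul, lid_tmul, tmul_smul, smul_tmul]
      | add v₁ v₂ hv₁ hv₂ => simp only [tmul_add, map_add, hv₁, hv₂]
    | add w₁ w₂ hw₁ hw₂ => simp only [add_tmul, map_add, hw₁, hw₂]
  -- pure coherence identity 3
  have P3 : lTensor M (TensorProduct.assoc K C D C).toLinearMap
        ∘ₗ lTensor M (rTensor C (lTensor C lam))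
        ∘ₗ (TensorProduct.assoc K M (C ⊗[K] C) C).toLinearMap
      = (TensorProduct.assoc K M C (D ⊗[K] C)).toLinearMap
        ∘ₗ (TensorProduct.assoc K (M ⊗[K] C) D C).toLinearMap
        ∘ₗ rTensor C (lTensor (M ⊗[K] C) lam)
        ∘ₗ rTensor C (TensorProduct.assoc K M C C).symm.toLinearMap := by
    apply TensorProduct.ext_threefold; intro m w c
    induction w using TensorProduct.induction_on with
    | zero => simp only [zero_tmul, tmul_zero, map_zero]
    | tmul a b =>
      simp only [LinearMap.coe_comp, Function.comp_apply, LinearEquiv.coe_coe,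
        LinearEquiv.coe_toLinearMap, rTensor_tmul, lTensor_tmul, assoc_tmul,
        assoc_symm_tmul]
    | add w₁ w₂ hw₁ hw₂ => simp only [tmul_add, add_tmul, map_add, hw₁, hw₂]
  -- the left-hand side
  have hL : ρM (E x) = lTensor M h₁ y := by
    rw [hE']
    calc ρM (((TensorProduct.rid K M).toLinearMap ∘ₗ lTensor M f
            ∘ₗ (TensorProduct.assoc K M C C).toLinearMap ∘ₗ rTensor C ρM) x)
        = ρM ((TensorProduct.rid K M).toLinearMap (lTensor M f y)) := by
          rw [hy, hu]; rfl
      _ = (TensorProduct.rid K (M ⊗[K] C)).toLinearMap (rTensor K ρM (lTensor M f y)) :=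
          LinearMap.congr_fun (stmt17natRid ρM) (lTensor M f y)
      _ = (TensorProduct.rid K (M ⊗[K] C)).toLinearMap
            (lTensor (M ⊗[K] C) f (rTensor (C ⊗[K] C) ρM y)) := by
          have hswap : rTensor K ρM ∘ₗ lTensor M f
              = lTensor (M ⊗[K] C) f ∘ₗ rTensor (C ⊗[K] C) ρM := by
            rw [rTensor_comp_lTensor, lTensor_comp_rTensor]
          exact congrArg _ (LinearMap.congr_fun hswap y)
      _ = (TensorProduct.rid K (M ⊗[K] C)).toLinearMap (lTensor (M ⊗[K] C) f
            ((TensorProduct.assoc K (M ⊗[K] C) C C).toLinearMap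
              (rTensor C (rTensor C ρM) u))) := by
          rw [hy]
          exact congrArg _ (congrArg _ (LinearMap.congr_fun (stmt17natFst ρM) u))
      _ = (TensorProduct.rid K (M ⊗[K] C)).toLinearMap (lTensor (M ⊗[K] C) f
            ((TensorProduct.assoc K (M ⊗[K] C) C C).toLinearMap
              (rTensor C (TensorProduct.assoc K M C C).symm.toLinearMap
                (rTensor C (lTensor M ΔC) u)))) := by
          rw [hu]
          have hmerge : rTensor C (rTensor C ρM) ∘ₗ rTensor C ρM
              = rTensor C (TensorProduct.assoc K M C C).symm.toLinearMap
                ∘ₗ rTensor C (lTensor M ΔC) ∘ₗ rTensor C ρM := by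
            rw [← rTensor_comp, h5]
            simp only [rTensor_comp, LinearMap.comp_assoc]
          exact congrArg _ (congrArg _ (congrArg _ (LinearMap.congr_fun hmerge x)))
      _ = lTensor M (TensorProduct.rid K C).toLinearMap (lTensor M (lTensor C f)
            (lTensor M (TensorProduct.assoc K C C C).toLinearMap
              ((TensorProduct.assoc K M (C ⊗[K] C) C).toLinearMap
                (rTensor C (lTensor M ΔC) u)))) :=
          LinearMap.congr_fun P1 (rTensor C (lTensor M ΔC) u)
      _ = lTensor M (TensorProduct.rid K C).toLinearMap (lTensor M (lTensor C f)
            (lTensor M (TensorProduct.assoc K C C C).toLinearMap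
              (lTensor M (rTensor C ΔC) y))) := by
          rw [hy]
          exact congrArg _ (congrArg _ (congrArg _
            (LinearMap.congr_fun (stmt17natMid ΔC) u).symm))
      _ = lTensor M h₁ y := by
          rw [hh₁]
          simp only [lTensor_comp, LinearMap.coe_comp, Function.comp_apply]
  -- the right-hand side
  have hR : rTensor C E ((TensorProduct.assoc K M C C).symm ((lTensor M ΔC) x))
      = lTensor M h₂ y := by
    rw [hE']
    have hER : rTensor C ((TensorProduct.rid K M).toLinearMap ∘ₗ lTensor M f
          ∘ₗ (TensorProduct.assoc K M C C).toLinearMap ∘ₗ rTensor C ρM)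
        = rTensor C (TensorProduct.rid K M).toLinearMap ∘ₗ rTensor C (lTensor M f)
          ∘ₗ rTensor C (TensorProduct.assoc K M C C).toLinearMap
          ∘ₗ rTensor C (rTensor C ρM) := by
      simp only [rTensor_comp, LinearMap.comp_assoc]
    rw [hER]
    calc (rTensor C (TensorProduct.rid K M).toLinearMap ∘ₗ rTensor C (lTensor M f)
            ∘ₗ rTensor C (TensorProduct.assoc K M C C).toLinearMap
            ∘ₗ rTensor C (rTensor C ρM))
          ((TensorProduct.assoc K M C C).symm ((lTensor M ΔC) x))
        = rTensor C (TensorProduct.rid K M).toLinearMap (rTensor C (lTensor M f)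
            (rTensor C (TensorProduct.assoc K M C C).toLinearMap
              ((TensorProduct.assoc K (M ⊗[K] C) C C).symm.toLinearMap
                (rTensor (C ⊗[K] C) ρM (lTensor M ΔC x))))) := by
          exact congrArg _ (congrArg _ (congrArg _
            (LinearMap.congr_fun (stmt17natFst' ρM) (lTensor M ΔC x))))
      _ = rTensor C (TensorProduct.rid K M).toLinearMap (rTensor C (lTensor M f)
            (rTensor C (TensorProduct.assoc K M C C).toLinearMap
              ((TensorProduct.assoc K (M ⊗[K] C) C C).symm.toLinearMap
                (lTensor (M ⊗[K] C) ΔC u)))) := by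
          rw [hu]
          have hswap : rTensor (C ⊗[K] C) ρM ∘ₗ lTensor M ΔC
              = lTensor (M ⊗[K] C) ΔC ∘ₗ rTensor C ρM := by
            rw [rTensor_comp_lTensor, lTensor_comp_rTensor]
          exact congrArg _ (congrArg _ (congrArg _ (congrArg _
            (LinearMap.congr_fun hswap x))))
      _ = lTensor M (TensorProduct.lid K C).toLinearMap (lTensor M (rTensor C f)
            (lTensor M (TensorProduct.assoc K C C C).symm.toLinearMap
              ((TensorProduct.assoc K M C (C ⊗[K] C)).toLinearMap
                (lTensor (M ⊗[K] C) ΔC u)))) :=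
          LinearMap.congr_fun P2 (lTensor (M ⊗[K] C) ΔC u)
      _ = lTensor M (TensorProduct.lid K C).toLinearMap (lTensor M (rTensor C f)
            (lTensor M (TensorProduct.assoc K C C C).symm.toLinearMap
              (lTensor M (lTensor C ΔC) y))) := by
          rw [hy]
          exact congrArg _ (congrArg _ (congrArg _
            (LinearMap.congr_fun (stmt17natLst ΔC) u).symm))
      _ = lTensor M h₂ y := by
          rw [hh₂]
          simp only [lTensor_comp, LinearMap.coe_comp, Function.comp_apply]
  -- kernel membership
  have hxeq : (TensorProduct.assoc K M D C).toLinearMap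
        (rTensor C (lTensor M lam ∘ₗ ρM) x)
      = lTensor M (rTensor C lam ∘ₗ ΔC) x := by
    have h0 := LinearMap.mem_ker.mp hx
    rw [LinearMap.sub_apply, sub_eq_zero] at h0
    exact h0
  have hker : lTensor M ω' y = 0 := by
    have hB : lTensor M (lTensor C (rTensor C lam ∘ₗ ΔC)) y
        = (TensorProduct.assoc K M C (D ⊗[K] C)).toLinearMap
            (rTensor (D ⊗[K] C) ρM (lTensor M (rTensor C lam ∘ₗ ΔC) x)) := by
      calc lTensor M (lTensor C (rTensor C lam ∘ₗ ΔC)) y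
          = (TensorProduct.assoc K M C (D ⊗[K] C)).toLinearMap
              (lTensor (M ⊗[K] C) (rTensor C lam ∘ₗ ΔC) u) := by
            rw [hy]
            exact LinearMap.congr_fun (stmt17natLst (rTensor C lam ∘ₗ ΔC)) u
        _ = (TensorProduct.assoc K M C (D ⊗[K] C)).toLinearMap
              (rTensor (D ⊗[K] C) ρM (lTensor M (rTensor C lam ∘ₗ ΔC) x)) := by
            rw [hu]
            have hswap : lTensor (M ⊗[K] C) (rTensor C lam ∘ₗ ΔC) ∘ₗ rTensor C ρM
                = rTensor (D ⊗[K] C) ρM ∘ₗ lTensor M (rTensor C lam ∘ₗ ΔC) := by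
              rw [lTensor_comp_rTensor, rTensor_comp_lTensor]
            exact congrArg _ (LinearMap.congr_fun hswap x)
    have hA : lTensor M ((TensorProduct.assoc K C D C).toLinearMap
          ∘ₗ rTensor C (lTensor C lam ∘ₗ ΔC)) y
        = (TensorProduct.assoc K M C (D ⊗[K] C)).toLinearMap
            (rTensor (D ⊗[K] C) ρM ((TensorProduct.assoc K M D C).toLinearMap
              (rTensor C (lTensor M lam ∘ₗ ρM) x))) := by
      calc lTensor M ((TensorProduct.assoc K C D C).toLinearMap
              ∘ₗ rTensor C (lTensor C lam ∘ₗ ΔC)) y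
          = lTensor M (TensorProduct.assoc K C D C).toLinearMap
              (lTensor M (rTensor C (lTensor C lam))
                (lTensor M (rTensor C ΔC) y)) := by
            simp only [lTensor_comp, rTensor_comp, LinearMap.coe_comp,
              Function.comp_apply]
        _ = lTensor M (TensorProduct.assoc K C D C).toLinearMap
              (lTensor M (rTensor C (lTensor C lam))
                ((TensorProduct.assoc K M (C ⊗[K] C) C).toLinearMap
                  (rTensor C (lTensor M ΔC) u))) := by
            rw [hy]
            exact congrArg _ (congrArg _ (LinearMap.congr_fun (stmt17natMid ΔC) u))
        _ = (TensorProduct.assoc K M C (D ⊗[K] C)).toLinearMap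
              ((TensorProduct.assoc K (M ⊗[K] C) D C).toLinearMap
                (rTensor C (lTensor (M ⊗[K] C) lam)
                  (rTensor C (TensorProduct.assoc K M C C).symm.toLinearMap
                    (rTensor C (lTensor M ΔC) u)))) :=
            LinearMap.congr_fun P3 (rTensor C (lTensor M ΔC) u)
        _ = (TensorProduct.assoc K M C (D ⊗[K] C)).toLinearMap
              ((TensorProduct.assoc K (M ⊗[K] C) D C).toLinearMap
                (rTensor C (rTensor D ρM)
                  (rTensor C (lTensor M lam ∘ₗ ρM) x))) := by
            rw [hu]
            have hmerge : rTensor C (lTensor (M ⊗[K] C) lam)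
                  ∘ₗ rTensor C (TensorProduct.assoc K M C C).symm.toLinearMap
                  ∘ₗ rTensor C (lTensor M ΔC) ∘ₗ rTensor C ρM
                = rTensor C (rTensor D ρM) ∘ₗ rTensor C (lTensor M lam ∘ₗ ρM) := by
              simp only [← rTensor_comp]
              congr 1
              rw [← h5, ← LinearMap.comp_assoc, lTensor_comp_rTensor,
                ← rTensor_comp_lTensor, LinearMap.comp_assoc]
            exact congrArg _ (congrArg _ (LinearMap.congr_fun hmerge x))
        _ = (TensorProduct.assoc K M C (D ⊗[K] C)).toLinearMap
              (rTensor (D ⊗[K] C) ρM ((TensorProduct.assoc K M D C).toLinearMap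
                (rTensor C (lTensor M lam ∘ₗ ρM) x))) := by
            exact congrArg _
              (LinearMap.congr_fun (stmt17natFst ρM)
                (rTensor C (lTensor M lam ∘ₗ ρM) x)).symm
    rw [hω', lTensor_sub]
    show lTensor M ((TensorProduct.assoc K C D C).toLinearMap
        ∘ₗ rTensor C (lTensor C lam ∘ₗ ΔC)) y
      - lTensor M (lTensor C (rTensor C lam ∘ₗ ΔC)) y = 0
    rw [hA, hB, hxeq, sub_self]
  -- h₁ and h₂ agree on M ⊗ (C □ C)
  have hagree : lTensor M h₁ y = lTensor M h₂ y := by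
    have hβ12 : h₁ ∘ₗ (LinearMap.ker ω').subtype = h₂ ∘ₗ (LinearMap.ker ω').subtype := by
      apply LinearMap.ext; rintro ⟨t, ht⟩
      have e1 : h₁ t = β t := by
        have hb := hβl t ht
        rw [hh₁]
        simp only [LinearMap.coe_comp, Function.comp_apply, LinearEquiv.coe_coe,
          LinearEquiv.coe_toLinearMap]
        rw [hf, lTensor_comp, LinearMap.comp_apply, ← hb]
        exact LinearMap.congr_fun hcrC (β t)
      have e2 : h₂ t = β t := by
        have hb := hβr t ht
        rw [hh₂]
        simp only [LinearMap.coe_comp, Function.comp_apply, LinearEquiv.coe_coe,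
          LinearEquiv.coe_toLinearMap]
        rw [hf, rTensor_comp, LinearMap.comp_apply, ← hb]
        exact LinearMap.congr_fun hclC (β t)
      simpa using e1.trans e2.symm
    have hexact := Module.Flat.lTensor_exact (M := M)
      (LinearMap.exact_subtype_ker_map ω')
    obtain ⟨z, hz⟩ := (hexact y).mp hker
    rw [← hz, ← LinearMap.comp_apply, ← LinearMap.comp_apply, ← lTensor_comp,
      ← lTensor_comp, hβ12]
  rw [hL, hR, hagree]
end

section
/- Let C be a coalgebra over a field K and let λ = ε_C : C → K, where K carries its trivial coalgebra structure. Suppose there exist e ∈ C and a C-bicomodule morphism π : C⊗C → C such that π(c⊗e) = π(e⊗c) = c for all c ∈ C. Then C is finite-dimensional. -/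
open Classical


open TensorProduct LinearMap

/-- if a coalgebra `C` over a field `K` admits an element `e ∈ C`
and a `C`-bicomodule morphism `π : C⊗C → C` (where `C⊗C = C □_K C` is a
`C`-bicomodule via `Δ_C` on the outer factors) with `π(c⊗e) = π(e⊗c) = c` for all
`c`, then `C` is finite-dimensional. -/
theorem stmt19 {K C : Type*} [Field K] [AddCommGroup C] [Module K C]
    (ΔC : C →ₗ[K] C ⊗[K] C) (εC : C →ₗ[K] K)
    (hcoC : (TensorProduct.assoc K C C C).toLinearMap ∘ₗ rTensor C ΔC ∘ₗ ΔC
      = lTensor C ΔC ∘ₗ ΔC)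
    (hclC : (TensorProduct.lid K C).toLinearMap ∘ₗ rTensor C εC ∘ₗ ΔC = LinearMap.id)
    (hcrC : (TensorProduct.rid K C).toLinearMap ∘ₗ lTensor C εC ∘ₗ ΔC = LinearMap.id)
    (e : C) (π : C ⊗[K] C →ₗ[K] C)
    -- `π` is a morphism of left `C`-comodules:
    (hπl : ΔC ∘ₗ π = lTensor C π ∘ₗ (TensorProduct.assoc K C C C).toLinearMap
      ∘ₗ rTensor C ΔC)
    -- `π` is a morphism of right `C`-comodules:
    (hπr : ΔC ∘ₗ π = rTensor C π ∘ₗ (TensorProduct.assoc K C C C).symm.toLinearMap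
      ∘ₗ lTensor C ΔC)
    (hπe : ∀ c : C, π (c ⊗ₜ[K] e) = c ∧ π (e ⊗ₜ[K] c) = c) :
    FiniteDimensional K C := by
  obtain ⟨S, hS⟩ := TensorProduct.exists_finset (ΔC e)
  rw [FiniteDimensional, Module.finite_def]
  refine ⟨S.image Prod.snd, le_antisymm le_top ?_⟩
  intro c _
  -- key identity: ΔC c = (π ⊗ 1)(assoc⁻¹ (c ⊗ ΔC e))
  have key : ΔC c = rTensor C π ((TensorProduct.assoc K C C C).symm
      (c ⊗ₜ[K] ΔC e)) := by
    have := congrArg (fun f => f (c ⊗ₜ[K] e)) hπr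
    simpa [(hπe c).1] using this
  have hc : c = (TensorProduct.lid K C) (rTensor C εC (ΔC c)) := by
    have := congrArg (fun f => f c) hclC
    simpa using this.symm
  rw [hc, key, hS, TensorProduct.tmul_sum]
  simp only [map_sum]
  apply Submodule.sum_mem
  intro i hi
  have : (TensorProduct.lid K C) (rTensor C εC (rTensor C π
      ((TensorProduct.assoc K C C C).symm (c ⊗ₜ[K] (i.1 ⊗ₜ[K] i.2)))))
      = εC (π (c ⊗ₜ[K] i.1)) • i.2 := by
    simp [TensorProduct.assoc_symm_tmul]
  rw [this]
  exact Submodule.smul_mem _ _ (Submodule.subset_span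
    (Finset.mem_image.2 ⟨i, hi, rfl⟩))
end
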